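/- Let A_1, ..., A_m be positive definite real symmetric n×n matrices, let x ∈ ℝ^m be entrywise nonnegative, and let B be a positive definite real symmetric n×n matrix. Set N = Σ_{i=1}^m x_i A_i, M = Σ_{i=1}^m tr(A_i B) A_i, and S = B # M^{-1} = B^{1/2} (B^{-1/2} M^{-1} B^{-1/2})^{1/2} B^{1/2}. If B = S N S (i.e., B is a fixed point of the multiplicative update), then M = N; that is, Σ_{i=1}^m tr(A_i B) A_i = Σ_{i=1}^m x_i A_i, so B satisfies the first-order stationarity condition 𝒜^T 𝒜 B = 𝒜^T x. (Theorem 4 of the paper, specialized to the positive semidefinite cone.) -/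

import Mathlib

/-!
The geometric mean `S = B # M⁻¹` solves the Riccati equation `S B⁻¹ S = M⁻¹`. Substituting the
fixed-point equation `B = S N S` turns it into `M⁻¹ = S (S N S)⁻¹ S = N⁻¹`, and `M` is invertible
because each weight `tr (A i * B)` is positive.
-/

open Matrix BigOperators

/- `msqrt A` is the positive semidefinite square root of `A` (junk value `0` when `A` is
not positive semidefinite). -/
open Classical in
noncomputable def msqrt {n : ℕ} (A : Matrix (Fin n) (Fin n) ℝ) : Matrix (Fin n) (Fin n) ℝ :=
  if h : A.PosSemidef then (h.1.eigenvectorUnitary : Matrix (Fin n) (Fin n) ℝ) *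
    diagonal ((↑) ∘ (√·) ∘ h.1.eigenvalues) * (star h.1.eigenvectorUnitary : Matrix (Fin n) (Fin n) ℝ)
  else 0

/- The matrix geometric mean `X # Y = X^{1/2} (X^{-1/2} Y X^{-1/2})^{1/2} X^{1/2}`. -/
noncomputable def gmean {n : ℕ} (X Y : Matrix (Fin n) (Fin n) ℝ) : Matrix (Fin n) (Fin n) ℝ :=
  msqrt X * msqrt (msqrt X⁻¹ * Y * msqrt X⁻¹) * msqrt X

open scoped MatrixOrder

namespace Matrix.PosDef

variable {ι : Type*} [Fintype ι] [DecidableEq ι]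

theorem trace_mul_pos [Nonempty ι] {A B : Matrix ι ι ℝ} (hA : A.PosDef) (hB : B.PosDef) :
    0 < (A * B).trace := by
  set R := CFC.sqrt B
  have hR : R.PosDef := (IsStrictlyPositive.sqrt B hB.isStrictlyPositive).posDef
  have hRA : (star R * A * R).PosDef := (IsUnit.posDef_star_left_conjugate_iff hR.isUnit).mpr hA
  rw [← CFC.sqrt_mul_sqrt_self B hB.posSemidef.nonneg, ← Matrix.mul_assoc, trace_mul_cycle]
  simpa [hR.isHermitian.star_eq] using hRA.trace_pos

end Matrix.PosDef

theorem Matrix.eq_of_mul_inv_mul_eq_inv {ι K : Type*} [Fintype ι] [DecidableEq ι] [Field K]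
    {S N M : Matrix ι ι K} (hM : IsUnit M.det) (h : S * (S * N * S)⁻¹ * S = M⁻¹) : M = N := by
  have hS : IsUnit S.det := by
    have hdet : IsUnit (S * (S * N * S)⁻¹ * S).det := h ▸ isUnit_nonsing_inv_det M hM
    rw [det_mul] at hdet
    exact isUnit_of_mul_isUnit_right hdet
  refine inv_inj ?_ hM
  rw [← h, mul_inv_rev, mul_inv_rev]
  simp only [Matrix.mul_assoc, mul_nonsing_inv_cancel_left _ _ hS, nonsing_inv_mul _ hS,
    Matrix.mul_one]

variable {n : ℕ}

theorem msqrt_eq_cfcSqrt {P : Matrix (Fin n) (Fin n) ℝ} (hP : P.PosSemidef) :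
    msqrt P = CFC.sqrt P := by
  rw [CFC.sqrt_eq_real_sqrt P hP.nonneg, cfcₙ_eq_cfc, hP.1.cfc_eq, IsHermitian.cfc, msqrt,
    dif_pos hP]
  rfl

theorem msqrt_mul_self {P : Matrix (Fin n) (Fin n) ℝ} (hP : P.PosSemidef) :
    msqrt P * msqrt P = P := by
  rw [msqrt_eq_cfcSqrt hP, CFC.sqrt_mul_sqrt_self P hP.nonneg]

theorem msqrt_inv {P : Matrix (Fin n) (Fin n) ℝ} (hP : P.PosSemidef) :
    msqrt P⁻¹ = (msqrt P)⁻¹ := by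
  rw [msqrt_eq_cfcSqrt hP, msqrt_eq_cfcSqrt hP.inv, hP.inv_sqrt]

theorem Matrix.PosDef.msqrt {P : Matrix (Fin n) (Fin n) ℝ} (hP : P.PosDef) :
    (msqrt P).PosDef := by
  rw [msqrt_eq_cfcSqrt hP.posSemidef]
  exact (IsStrictlyPositive.sqrt P hP.isStrictlyPositive).posDef

theorem gmean_mul_inv_mul_gmean {X Y : Matrix (Fin n) (Fin n) ℝ} (hX : X.PosDef)
    (hY : Y.PosSemidef) : gmean X Y * X⁻¹ * gmean X Y = Y := by
  have hR : IsUnit (msqrt X) := hX.msqrt.isUnit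
  have hT := msqrt_mul_self (P := (msqrt X)⁻¹ * Y * (msqrt X)⁻¹) <| by
    simpa only [hX.msqrt.isHermitian.inv.eq] using hY.conjTranspose_mul_mul_same (msqrt X)⁻¹
  rw [gmean, msqrt_inv hX.posSemidef]
  set R := msqrt X
  set T := msqrt (R⁻¹ * Y * R⁻¹)
  have hRR : R * R⁻¹ = 1 := R.mul_nonsing_inv ((isUnit_iff_isUnit_det R).mp hR)
  have hRR' : R⁻¹ * R = 1 := R.nonsing_inv_mul ((isUnit_iff_isUnit_det R).mp hR)
  have hXinv : X⁻¹ = R⁻¹ * R⁻¹ := by rw [← msqrt_mul_self hX.posSemidef, Matrix.mul_inv_rev]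
  calc R * T * R * X⁻¹ * (R * T * R)
      = R * T * (R * R⁻¹) * (R⁻¹ * R) * T * R := by rw [hXinv]; simp only [Matrix.mul_assoc]
    _ = R * (T * T) * R := by rw [hRR, hRR']; simp only [Matrix.mul_one, Matrix.mul_assoc]
    _ = (R * R⁻¹) * Y * (R⁻¹ * R) := by rw [hT]; simp only [Matrix.mul_assoc]
    _ = Y := by rw [hRR, hRR', Matrix.one_mul, Matrix.mul_one]

theorem stmt5_general {n m : ℕ} (A : Fin m → Matrix (Fin n) (Fin n) ℝ)
    (hA : ∀ i, (A i).PosDef)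
    (x : Fin m → ℝ)
    (B : Matrix (Fin n) (Fin n) ℝ) (hB : B.PosDef)
    (N M S : Matrix (Fin n) (Fin n) ℝ)
    (hN : N = ∑ i, x i • A i)
    (hM : M = ∑ i, (Matrix.trace (A i * B)) • A i)
    (hS : S = gmean B M⁻¹)
    (hfix : B = S * N * S) :
    M = N := by
  rcases isEmpty_or_nonempty (Fin n) with _ | _
  · exact Subsingleton.elim M N
  rcases isEmpty_or_nonempty (Fin m) with _ | _
  · simp [hM, hN]
  have hMpd : M.PosDef :=
    hM ▸ posDef_sum Finset.univ_nonempty fun i _ => (hA i).smul ((hA i).trace_mul_pos hB)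
  have hRiccati : S * B⁻¹ * S = M⁻¹ := hS ▸ gmean_mul_inv_mul_gmean hB hMpd.inv.posSemidef
  rw [hfix] at hRiccati
  exact eq_of_mul_inv_mul_eq_inv ((isUnit_iff_isUnit_det M).mp hMpd.isUnit) hRiccati

theorem stmt5 {n m : ℕ} (A : Fin m → Matrix (Fin n) (Fin n) ℝ)
    (hA : ∀ i, (A i).PosDef)
    (x : Fin m → ℝ) (hx : ∀ i, 0 ≤ x i)
    (B : Matrix (Fin n) (Fin n) ℝ) (hB : B.PosDef)
    (N M S : Matrix (Fin n) (Fin n) ℝ)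
    (hN : N = ∑ i, x i • A i)
    (hM : M = ∑ i, (Matrix.trace (A i * B)) • A i)
    (hS : S = gmean B M⁻¹)
    (hfix : B = S * N * S) :
    M = N :=
  stmt5_general A hA x B hB N M S hN hM hS hfix
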